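/- arXiv:0712.4016 — 6 statements merged into one kernel-verified Lean document; each statement's English description precedes it below -/
import Mathlib

section
/- Define on ℝ⁵ the operation (x₁,y₁,z₁,t₁,v₁)⋆(x₂,y₂,z₂,t₂,v₂) = (x₁+x₂, y₁+y₂, z₁+z₂−y₁x₂, t₁+t₂, v₁+v₂+z₁x₂−(1/2)y₁x₂²+t₁y₂). Then ⋆ is a group operation on ℝ⁵: it is associative, (0,0,0,0,0) is a two-sided identity, and for every (x,y,z,t,v) the element (−x,−y,−z−yx,−t,−v+zx+(1/2)yx²+ty) is a two-sided inverse. In particular ψ((x₁,y₁,z₁,t₁),(x₂,y₂,z₂,t₂)) = z₁x₂−(1/2)y₁x₂²+t₁y₂ is a real-valued 2-cocycle on the group G, defining a central extension G̃ of G by ℝ. -/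
noncomputable section

/-- The group `G = Heis(3) × ℝ` with underlying set `ℝ⁴`. -/
abbrev G4 : Type := ℝ × ℝ × ℝ × ℝ

/-- The underlying set `ℝ⁵` of the central extension `G̃`. -/
abbrev G5 : Type := ℝ × ℝ × ℝ × ℝ × ℝ

/-- Multiplication on `G`:
`(x₁,y₁,z₁,t₁)·(x₂,y₂,z₂,t₂) = (x₁+x₂, y₁+y₂, z₁+z₂−y₁x₂, t₁+t₂)`. -/
def gmul (g₁ g₂ : G4) : G4 :=
  (g₁.1 + g₂.1, g₁.2.1 + g₂.2.1, g₁.2.2.1 + g₂.2.2.1 - g₁.2.1 * g₂.1,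
   g₁.2.2.2 + g₂.2.2.2)

/-- The cocycle `ψ((x₁,y₁,z₁,t₁),(x₂,y₂,z₂,t₂)) = z₁x₂ − (1/2)y₁x₂² + t₁y₂`. -/
def ψ (g₁ g₂ : G4) : ℝ :=
  g₁.2.2.1 * g₂.1 - (1 / 2) * g₁.2.1 * g₂.1 ^ 2 + g₁.2.2.2 * g₂.2.1

/-- Multiplication on `G̃ = ℝ⁵`. -/
def gtmul (g₁ g₂ : G5) : G5 :=
  (g₁.1 + g₂.1, g₁.2.1 + g₂.2.1, g₁.2.2.1 + g₂.2.2.1 - g₁.2.1 * g₂.1,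
   g₁.2.2.2.1 + g₂.2.2.2.1,
   g₁.2.2.2.2 + g₂.2.2.2.2 + g₁.2.2.1 * g₂.1 - (1 / 2) * g₁.2.1 * g₂.1 ^ 2
     + g₁.2.2.2.1 * g₂.2.1)

/-- The claimed two-sided inverse `(−x,−y,−z−yx,−t,−v+zx+(1/2)yx²+ty)`. -/
def gtinv (g : G5) : G5 :=
  (-g.1, -g.2.1, -g.2.2.1 - g.2.1 * g.1, -g.2.2.2.1,
   -g.2.2.2.2 + g.2.2.1 * g.1 + (1 / 2) * g.2.1 * g.1 ^ 2 + g.2.2.2.1 * g.2.1)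

/-- `⋆` is a group operation on `ℝ⁵`: associative, with identity `(0,0,0,0,0)` and
explicit two-sided inverses; and `ψ` is a 2-cocycle on `G`. -/
theorem stmt0 :
    (∀ g₁ g₂ g₃ : G5, gtmul (gtmul g₁ g₂) g₃ = gtmul g₁ (gtmul g₂ g₃)) ∧
    (∀ g : G5, gtmul ((0 : ℝ), (0 : ℝ), (0 : ℝ), (0 : ℝ), (0 : ℝ)) g = g ∧
      gtmul g ((0 : ℝ), (0 : ℝ), (0 : ℝ), (0 : ℝ), (0 : ℝ)) = g) ∧
    (∀ g : G5, gtmul g (gtinv g) = ((0 : ℝ), (0 : ℝ), (0 : ℝ), (0 : ℝ), (0 : ℝ)) ∧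
      gtmul (gtinv g) g = ((0 : ℝ), (0 : ℝ), (0 : ℝ), (0 : ℝ), (0 : ℝ))) ∧
    (∀ g₁ g₂ g₃ : G4, ψ g₁ g₂ + ψ (gmul g₁ g₂) g₃ = ψ g₂ g₃ + ψ g₁ (gmul g₂ g₃)) := by
  refine ⟨fun g₁ g₂ g₃ => ?_, fun g => ⟨?_, ?_⟩, fun g => ⟨?_, ?_⟩, fun g₁ g₂ g₃ => ?_⟩ <;> simp [gtmul, gtinv, gmul, ψ, Prod.ext_iff] <;> and_intros <;> ring

end
end

section
/- Let h be a Lie subalgebra of g̃. (a) If β^U([X,Y]) = 0 for all X,Y ∈ h, then dim h ≤ 3. (b) If dim h = 3, then β^U([X,Y]) = 0 for all X,Y ∈ h if and only if h = L ⊕ ℝ·U for some Lagrangian subspace L ⊆ g. (This says a subalgebra of g̃ is subordinate to the coadjoint orbits through μβ^U, μ ≠ 0, exactly when it is of the form L ⊕ ℝU with L Lagrangian.) -/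
noncomputable section

/-- The bracket of `g̃`. -/
def lb (X Y : G5) : G5 :=
  (0, 0, X.1 * Y.2.1 - X.2.1 * Y.1, 0,
   -(X.1 * Y.2.2.1 - X.2.2.1 * Y.1) - (X.2.1 * Y.2.2.2.1 - X.2.2.2.1 * Y.2.1))

/-- `β^U : g̃ → ℝ` reads off the `U`-coefficient. -/
def βU (X : G5) : ℝ := X.2.2.2.2

/-- The form `ω₀`, read on the first four coordinates (the `g`-part). -/
def ω0 (X Y : G5) : ℝ :=
  X.1 * Y.2.2.1 - X.2.2.1 * Y.1 + X.2.1 * Y.2.2.2.1 - X.2.2.2.1 * Y.2.1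

def X1v : G5 := (1, 0, 0, 0, 0)
def X2v : G5 := (0, 1, 0, 0, 0)
def X3v : G5 := (0, 0, 1, 0, 0)
def Tv : G5 := (0, 0, 0, 1, 0)
def Uv : G5 := (0, 0, 0, 0, 1)

/-- The subspace `g = span{X₁,X₂,X₃,T} ⊆ g̃`. -/
def gsub : Submodule ℝ G5 := Submodule.span ℝ {X1v, X2v, X3v, Tv}

open Module Submodule

lemma βU_lb (X Y : G5) : βU (lb X Y) = -ω0 X Y := by
  simp only [βU, lb, ω0]; ring

/-- `ω₀` as a bilinear form. -/
def Bω : LinearMap.BilinForm ℝ G5 :=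
  LinearMap.mk₂ ℝ ω0
    (by intro x y z; simp only [ω0, Prod.fst_add, Prod.snd_add]; ring)
    (by intro a x y; simp only [ω0, Prod.smul_fst, Prod.smul_snd, smul_eq_mul]; ring)
    (by intro x y z; simp only [ω0, Prod.fst_add, Prod.snd_add]; ring)
    (by intro a x y; simp only [ω0, Prod.smul_fst, Prod.smul_snd, smul_eq_mul]; ring)

@[simp] lemma Bω_apply (X Y : G5) : Bω X Y = ω0 X Y := rfl

lemma Bω_refl : Bω.IsRefl := by
  intro x y h
  have h2 : ω0 y x = -ω0 x y := by simp only [ω0]; ring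
  simp only [Bω_apply] at h ⊢
  rw [h2, h, neg_zero]

lemma mem_span_Uv {x : G5} :
    x ∈ Submodule.span ℝ {Uv} ↔ x.1 = 0 ∧ x.2.1 = 0 ∧ x.2.2.1 = 0 ∧ x.2.2.2.1 = 0 := by
  rw [Submodule.mem_span_singleton]
  constructor
  · rintro ⟨a, rfl⟩
    simp [Uv]
  · rintro ⟨h1, h2, h3, h4⟩
    exact ⟨x.2.2.2.2, by simp [Uv, Prod.ext_iff, h1, h2, h3, h4]⟩

lemma rad_le : Bω.orthogonal ⊤ ≤ Submodule.span ℝ {Uv} := by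
  intro x hx
  rw [LinearMap.BilinForm.mem_orthogonal_iff] at hx
  have h1 := hx X1v trivial
  have h2 := hx X2v trivial
  have h3 := hx X3v trivial
  have h4 := hx Tv trivial
  simp only [LinearMap.BilinForm.IsOrtho, Bω_apply, ω0, X1v, X2v, X3v, Tv] at h1 h2 h3 h4
  rw [mem_span_Uv]
  constructor; · linarith
  constructor; · linarith
  constructor; · linarith
  · linarith

lemma finrank_G5 : Module.finrank ℝ G5 = 5 := by
  simp [Module.finrank_prod]

lemma finrank_span_Uv : Module.finrank ℝ (Submodule.span ℝ {Uv} : Submodule ℝ G5) = 1 := by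
  apply finrank_span_singleton
  simp [Uv, Prod.ext_iff]

lemma mem_gsub_iff {x : G5} : x ∈ gsub ↔ x.2.2.2.2 = 0 := by
  constructor
  · intro hx
    induction hx using Submodule.span_induction with
    | mem y hy =>
      rcases hy with rfl | rfl | rfl | rfl <;> simp [X1v, X2v, X3v, Tv]
    | zero => simp
    | add y z _ _ hy hz => simp [Prod.snd_add, hy, hz]
    | smul a y _ hy => simp [Prod.smul_snd, hy]
  · intro hx
    have hrep : x = x.1 • X1v + x.2.1 • X2v + x.2.2.1 • X3v + x.2.2.2.1 • Tv := by
      simp [X1v, X2v, X3v, Tv, Prod.ext_iff, hx]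
    rw [hrep]
    refine Submodule.add_mem _ (Submodule.add_mem _ (Submodule.add_mem _ ?_ ?_) ?_) ?_ <;>
      apply Submodule.smul_mem <;> apply Submodule.subset_span <;> simp

lemma gsub_inf_span_Uv {x : G5} (hg : x ∈ gsub) (hu : x ∈ Submodule.span ℝ {Uv}) : x = 0 := by
  rw [mem_gsub_iff] at hg
  rw [Submodule.mem_span_singleton] at hu
  obtain ⟨a, rfl⟩ := hu
  simp only [Uv, Prod.smul_snd, Prod.smul_fst, smul_eq_mul, mul_one] at hg
  simp [hg]

/-- An `ω₀`-isotropic subspace of `G5` has dimension at most 3. -/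
lemma isotropic_finrank_le (h : Submodule ℝ G5) (hiso : ∀ X ∈ h, ∀ Y ∈ h, ω0 X Y = 0) :
    Module.finrank ℝ h ≤ 3 := by
  have hle : h ≤ Bω.orthogonal h := by
    intro x hx
    rw [LinearMap.BilinForm.mem_orthogonal_iff]
    intro n hn
    exact hiso n hn x hx
  have hkey := LinearMap.BilinForm.finrank_add_finrank_orthogonal Bω_refl h
  have h1 : Module.finrank ℝ h ≤ Module.finrank ℝ (Bω.orthogonal h) :=
    Submodule.finrank_mono hle
  have h2 : Module.finrank ℝ (h ⊓ Bω.orthogonal ⊤ : Submodule ℝ G5) ≤ 1 := by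
    calc Module.finrank ℝ (h ⊓ Bω.orthogonal ⊤ : Submodule ℝ G5)
        ≤ Module.finrank ℝ (Submodule.span ℝ {Uv} : Submodule ℝ G5) :=
          Submodule.finrank_mono (le_trans inf_le_right rad_le)
      _ = 1 := finrank_span_Uv
  rw [finrank_G5] at hkey
  omega

/-- An `ω₀`-isotropic subspace of `gsub` has dimension at most 2. -/
lemma isotropic_finrank_le_two (h : Submodule ℝ G5) (hg : h ≤ gsub)
    (hiso : ∀ X ∈ h, ∀ Y ∈ h, ω0 X Y = 0) : Module.finrank ℝ h ≤ 2 := by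
  have hle : h ≤ Bω.orthogonal h := by
    intro x hx
    rw [LinearMap.BilinForm.mem_orthogonal_iff]
    intro n hn
    exact hiso n hn x hx
  have hkey := LinearMap.BilinForm.finrank_add_finrank_orthogonal Bω_refl h
  have h1 : Module.finrank ℝ h ≤ Module.finrank ℝ (Bω.orthogonal h) :=
    Submodule.finrank_mono hle
  have h2 : (h ⊓ Bω.orthogonal ⊤ : Submodule ℝ G5) = ⊥ := by
    rw [eq_bot_iff]
    rintro x ⟨hx1, hx2⟩
    exact gsub_inf_span_Uv (hg hx1) (rad_le hx2)
  rw [h2, finrank_bot, finrank_G5] at hkey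
  omega

/-- Projection killing the `U`-coordinate. -/
def pU : G5 →ₗ[ℝ] G5 where
  toFun x := (x.1, x.2.1, x.2.2.1, x.2.2.2.1, 0)
  map_add' x y := by simp [Prod.ext_iff]
  map_smul' a x := by simp [Prod.ext_iff]

/-- (a) A Lie subalgebra of `g̃` on which `β^U ∘ [·,·]` vanishes has dimension at
most `3`.  (b) A 3-dimensional Lie subalgebra `h` of `g̃` satisfies
`β^U([X,Y]) = 0` for all `X,Y ∈ h` if and only if `h = L ⊕ ℝ·U` for some
Lagrangian subspace `L ⊆ g`. -/
theorem stmt4 :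
    (∀ h : Submodule ℝ G5, (∀ X ∈ h, ∀ Y ∈ h, lb X Y ∈ h) →
      (∀ X ∈ h, ∀ Y ∈ h, βU (lb X Y) = 0) → Module.finrank ℝ h ≤ 3) ∧
    (∀ h : Submodule ℝ G5, (∀ X ∈ h, ∀ Y ∈ h, lb X Y ∈ h) →
      Module.finrank ℝ h = 3 →
      ((∀ X ∈ h, ∀ Y ∈ h, βU (lb X Y) = 0) ↔
        ∃ L : Submodule ℝ G5, L ≤ gsub ∧ Module.finrank ℝ L = 2 ∧
          (∀ X ∈ L, ∀ Y ∈ L, ω0 X Y = 0) ∧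
          h = L ⊔ Submodule.span ℝ {Uv})) := by
  have iso_of_β : ∀ (h : Submodule ℝ G5), (∀ X ∈ h, ∀ Y ∈ h, βU (lb X Y) = 0) →
      ∀ X ∈ h, ∀ Y ∈ h, ω0 X Y = 0 := by
    intro h hβ X hX Y hY
    have := hβ X hX Y hY
    rw [βU_lb, neg_eq_zero] at this
    exact this
  constructor
  · intro h _ hβ
    exact isotropic_finrank_le h (iso_of_β h hβ)
  · intro h _ hdim
    constructor
    · intro hβ
      have hiso := iso_of_β h hβ
      -- step 1: Uv ∈ h
      set p' : h →ₗ[ℝ] G5 := pU.comp h.subtype with hp'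
      have hrange_g : LinearMap.range p' ≤ gsub := by
        rintro x ⟨⟨y, hy⟩, rfl⟩
        rw [mem_gsub_iff]
        rfl
      have hrange_iso : ∀ X ∈ LinearMap.range p', ∀ Y ∈ LinearMap.range p', ω0 X Y = 0 := by
        rintro X ⟨⟨x, hx⟩, rfl⟩ Y ⟨⟨y, hy⟩, rfl⟩
        have : ω0 (p' ⟨x, hx⟩) (p' ⟨y, hy⟩) = ω0 x y := rfl
        rw [this]
        exact hiso x hx y hy
      have hrk : Module.finrank ℝ (LinearMap.range p') ≤ 2 :=
        isotropic_finrank_le_two _ hrange_g hrange_iso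
      have hrn := LinearMap.finrank_range_add_finrank_ker p'
      rw [hdim] at hrn
      have hker1 : 1 ≤ Module.finrank ℝ (LinearMap.ker p') := by omega
      have hmap_le : Submodule.map h.subtype (LinearMap.ker p') ≤ Submodule.span ℝ {Uv} := by
        rintro x ⟨⟨y, hy⟩, hky, rfl⟩
        have hky' : p' ⟨y, hy⟩ = 0 := hky
        have hc : (pU y).1 = 0 ∧ (pU y).2.1 = 0 ∧ (pU y).2.2.1 = 0 ∧ (pU y).2.2.2.1 = 0 := by
          have : pU y = 0 := hky'
          rw [this]; simp
        rw [mem_span_Uv]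
        exact hc
      have hmapfr : Module.finrank ℝ (Submodule.map h.subtype (LinearMap.ker p')) =
          Module.finrank ℝ (LinearMap.ker p') :=
        Submodule.finrank_map_subtype_eq h (LinearMap.ker p')
      have hmap_eq : Submodule.map h.subtype (LinearMap.ker p') = Submodule.span ℝ {Uv} :=
        Submodule.eq_of_le_of_finrank_le hmap_le (by rw [hmapfr, finrank_span_Uv]; omega)
      have hU : Uv ∈ h := by
        have : Uv ∈ Submodule.map h.subtype (LinearMap.ker p') := by
          rw [hmap_eq]
          exact Submodule.mem_span_singleton_self Uv
        rcases this with ⟨⟨y, hy⟩, _, rfl⟩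
        exact hy
      -- step 2: construct L
      refine ⟨h ⊓ gsub, inf_le_right, ?_, ?_, ?_⟩
      · -- finrank = 2, proved after h = L ⊔ span Uv; prove the decomposition first
        have hdecomp : h = (h ⊓ gsub) ⊔ Submodule.span ℝ {Uv} := by
          apply le_antisymm
          · intro x hx
            have h1 : x - x.2.2.2.2 • Uv ∈ h :=
              Submodule.sub_mem _ hx (Submodule.smul_mem _ _ hU)
            have h2 : x - x.2.2.2.2 • Uv ∈ gsub := by
              rw [mem_gsub_iff]
              simp [Uv]
            have h3 : x.2.2.2.2 • Uv ∈ Submodule.span ℝ {Uv} :=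
              Submodule.smul_mem _ _ (Submodule.mem_span_singleton_self Uv)
            have : x = (x - x.2.2.2.2 • Uv) + x.2.2.2.2 • Uv := by ring
            rw [this]
            exact Submodule.add_mem _ (Submodule.mem_sup_left ⟨h1, h2⟩)
              (Submodule.mem_sup_right h3)
          · exact sup_le inf_le_left ((Submodule.span_le).2 (by simpa using hU))
        have hinf : ((h ⊓ gsub) ⊓ Submodule.span ℝ {Uv} : Submodule ℝ G5) = ⊥ := by
          rw [eq_bot_iff]
          rintro x ⟨⟨_, hxg⟩, hxu⟩
          exact gsub_inf_span_Uv hxg hxu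
        have := Submodule.finrank_sup_add_finrank_inf_eq (h ⊓ gsub) (Submodule.span ℝ {Uv})
        rw [← hdecomp, hinf, finrank_bot, hdim, finrank_span_Uv] at this
        omega
      · intro X hX Y hY
        exact hiso X hX.1 Y hY.1
      · apply le_antisymm
        · intro x hx
          have h1 : x - x.2.2.2.2 • Uv ∈ h :=
            Submodule.sub_mem _ hx (Submodule.smul_mem _ _ hU)
          have h2 : x - x.2.2.2.2 • Uv ∈ gsub := by
            rw [mem_gsub_iff]
            simp [Uv]
          have h3 : x.2.2.2.2 • Uv ∈ Submodule.span ℝ {Uv} :=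
            Submodule.smul_mem _ _ (Submodule.mem_span_singleton_self Uv)
          have : x = (x - x.2.2.2.2 • Uv) + x.2.2.2.2 • Uv := by ring
          rw [this]
          exact Submodule.add_mem _ (Submodule.mem_sup_left ⟨h1, h2⟩)
            (Submodule.mem_sup_right h3)
        · exact sup_le inf_le_left ((Submodule.span_le).2 (by simpa using hU))
    · rintro ⟨L, hLg, _, hLiso, rfl⟩
      intro X hX Y hY
      rw [βU_lb, neg_eq_zero]
      rcases Submodule.mem_sup.1 hX with ⟨lx, hlx, ux, hux, rfl⟩
      rcases Submodule.mem_sup.1 hY with ⟨ly, hly, uy, huy, rfl⟩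
      rcases Submodule.mem_span_singleton.1 hux with ⟨a, rfl⟩
      rcases Submodule.mem_span_singleton.1 huy with ⟨b, rfl⟩
      have : ω0 (lx + a • Uv) (ly + b • Uv) = ω0 lx ly := by
        simp only [ω0, Uv, Prod.fst_add, Prod.snd_add, Prod.smul_fst, Prod.smul_snd,
          smul_eq_mul]
        ring
      rw [this]
      exact hLiso lx hlx ly hly

end
end

section
/- A subset h ⊆ g̃ is a 3-dimensional Lie subalgebra with β^U([X,Y]) = 0 for all X,Y ∈ h if and only if h is one of the following: span{X₁+cX₃, T, U} for some c ∈ ℝ; span{X₃, T, U}; span{X₁+bX₂+dT, X₃−(1/b)T, U} for some b ∈ ℝ∖{0} and d ∈ ℝ; or span{X₂+eT, X₃, U} for some e ∈ ℝ. (These are the subalgebras h^c, h^{c=∞}, h^{b,d}, h^e subordinate to the four-dimensional coadjoint orbits of G̃.) -/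
/-! Since `β^U` vanishes on `[h, h]`, the bracket of `X, Y ∈ h` is `(X₁Y₂ - X₂Y₁) • X₃`. If that
coefficient were nonzero, closure would put `X₃` in `h`, and then `β^U([X, X₃]) = -X₁` and
`β^U([Y, X₃]) = -Y₁` vanish, so the coefficient is zero after all: the two conditions say exactly
that `h` is abelian. An abelian `h` projects to a line (or to zero) in the `X₁X₂`-plane and is
isotropic for `β^U([·,·])`. Normalising one element of `h` with nonzero projection, if any,
confines `h` to one of the four listed spans, and equality follows by dimension. -/

noncomputable section

open Module Submodule

lemma range_vecCons_three {α : Type*} (u v w : α) : Set.range ![u, v, w] = {u, v, w} := by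
  rw [Matrix.range_cons, Matrix.range_cons, Matrix.range_cons_empty, Set.singleton_union,
    Set.singleton_union]

section

variable {K M : Type*} [Field K] [AddCommGroup M] [Module K M]

lemma finrank_span_triple_le (u v w : M) : finrank K (span K {u, v, w}) ≤ 3 := by
  have := finrank_range_le_card (R := K) ![u, v, w]
  rwa [range_vecCons_three, Fintype.card_fin] at this

lemma finrank_span_triple {u v w : M} (h : LinearIndependent K ![u, v, w]) :
    finrank K (span K {u, v, w}) = 3 := by
  rw [← range_vecCons_three, finrank_span_eq_card h, Fintype.card_fin]

lemma eq_span_triple_of_le {p : Submodule K M} {u v w : M} (hle : p ≤ span K {u, v, w})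
    (hp : finrank K p = 3) : p = span K {u, v, w} :=
  have := FiniteDimensional.span_of_finite K (Set.toFinite {u, v, w})
  eq_of_le_of_finrank_le hle (hp ▸ finrank_span_triple_le u v w)

end

def lbₗ : G5 →ₗ[ℝ] G5 →ₗ[ℝ] G5 :=
  LinearMap.mk₂ ℝ lb
    (fun _ _ _ ↦ by ext <;> simp [lb] <;> ring)
    (fun _ _ _ ↦ by ext <;> simp [lb] <;> ring)
    (fun _ _ _ ↦ by ext <;> simp [lb] <;> ring)
    (fun _ _ _ ↦ by ext <;> simp [lb] <;> ring)

def IsAbelian (h : Submodule ℝ G5) : Prop := ∀ X ∈ h, ∀ Y ∈ h, lb X Y = 0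

lemma isAbelian_span {s : Set G5} (hs : ∀ a ∈ s, ∀ b ∈ s, lb a b = 0) :
    IsAbelian (span ℝ s) := by
  intro X hX Y hY
  have hmem := apply_mem_map₂ lbₗ hX hY
  rw [map₂_span_span, span_eq_bot.2 ?_] at hmem
  · exact (mem_bot ℝ).1 hmem
  · rintro _ ⟨a, ha, b, hb, rfl⟩
    exact hs a ha b hb

lemma lb_eq_smul_X3v_of_βU_eq_zero {X Y : G5} (h : βU (lb X Y) = 0) :
    lb X Y = (X.1 * Y.2.1 - X.2.1 * Y.1) • X3v := by
  simp only [βU, lb] at h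
  ext <;> simp [lb, X3v]
  linear_combination h

lemma βU_lb_X3v (X : G5) : βU (lb X X3v) = -X.1 := by
  simp [βU, lb, X3v]

lemma isAbelian_of_closed_of_βU {h : Submodule ℝ G5} (hcl : ∀ X ∈ h, ∀ Y ∈ h, lb X Y ∈ h)
    (hβ : ∀ X ∈ h, ∀ Y ∈ h, βU (lb X Y) = 0) : IsAbelian h := by
  intro X hX Y hY
  have hδ : X.1 * Y.2.1 - X.2.1 * Y.1 = 0 := by
    by_contra hδ
    have hX3v : X3v ∈ h := by
      have := h.smul_mem (X.1 * Y.2.1 - X.2.1 * Y.1)⁻¹ (hcl X hX Y hY)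
      rwa [lb_eq_smul_X3v_of_βU_eq_zero (hβ X hX Y hY), inv_smul_smul₀ hδ] at this
    have hX1 : X.1 = 0 := by simpa [βU_lb_X3v] using hβ X hX X3v hX3v
    have hY1 : Y.1 = 0 := by simpa [βU_lb_X3v] using hβ Y hY X3v hX3v
    simp [hX1, hY1] at hδ
  rw [lb_eq_smul_X3v_of_βU_eq_zero (hβ X hX Y hY), hδ, zero_smul]

lemma isAbelian_iff {h : Submodule ℝ G5} :
    IsAbelian h ↔
      (∀ X ∈ h, ∀ Y ∈ h, lb X Y ∈ h) ∧ (∀ X ∈ h, ∀ Y ∈ h, βU (lb X Y) = 0) := by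
  refine ⟨fun hab ↦ ⟨fun X hX Y hY ↦ ?_, fun X hX Y hY ↦ ?_⟩,
    fun ⟨hcl, hβ⟩ ↦ isAbelian_of_closed_of_βU hcl hβ⟩
  · rw [hab X hX Y hY]
    exact zero_mem h
  · rw [hab X hX Y hY]
    rfl

lemma lb_eq_zero_iff {X Y : G5} :
    lb X Y = 0 ↔ X.1 * Y.2.1 - X.2.1 * Y.1 = 0 ∧
      X.1 * Y.2.2.1 - X.2.2.1 * Y.1 + (X.2.1 * Y.2.2.2.1 - X.2.2.2.1 * Y.2.1) = 0 := by
  simp only [lb, Prod.ext_iff, Prod.fst_zero, Prod.snd_zero, true_and]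
  rw [← neg_add', neg_eq_zero]

-- The subalgebras `h^c`, `h^{c=∞}`, `h^{b,d}`, `h^e` subordinate to the generic orbits.
def subordC (c : ℝ) : Submodule ℝ G5 := span ℝ {X1v + c • X3v, Tv, Uv}

def subordInfty : Submodule ℝ G5 := span ℝ {X3v, Tv, Uv}

def subordBD (b d : ℝ) : Submodule ℝ G5 :=
  span ℝ {X1v + b • X2v + d • Tv, X3v - (1 / b) • Tv, Uv}

def subordE (e : ℝ) : Submodule ℝ G5 := span ℝ {X2v + e • Tv, X3v, Uv}

section

variable {h : Submodule ℝ G5} (hab : IsAbelian h) {Z : G5} (hZ : Z ∈ h)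
include hab hZ

lemma le_subordC (h1 : Z.1 = 1) (h2 : Z.2.1 = 0) : h ≤ subordC Z.2.2.1 := by
  intro Y hY
  obtain ⟨e2, e3⟩ := lb_eq_zero_iff.1 (hab Z hZ Y hY)
  rw [h1, h2] at e2 e3
  have hY2 : Y.2.1 = 0 := by linear_combination e2
  have hY3 : Y.2.2.1 = Z.2.2.1 * Y.1 := by linear_combination e3 + Z.2.2.2.1 * e2
  refine mem_span_triple.2 ⟨Y.1, Y.2.2.2.1, Y.2.2.2.2, ?_⟩
  ext <;> simp [X1v, X3v, Tv, Uv, hY2, hY3, mul_comm]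

lemma le_subordBD (h1 : Z.1 = 1) (h2 : Z.2.1 ≠ 0) :
    h ≤ subordBD Z.2.1 (Z.2.2.1 / Z.2.1 + Z.2.2.2.1) := by
  intro Y hY
  obtain ⟨e2, e3⟩ := lb_eq_zero_iff.1 (hab Z hZ Y hY)
  rw [h1] at e2 e3
  have hY2 : Y.2.1 = Z.2.1 * Y.1 := by linear_combination e2
  have hY3 : Y.2.2.1 = (Z.2.2.1 + Z.2.2.2.1 * Z.2.1) * Y.1 - Z.2.1 * Y.2.2.2.1 := by
    linear_combination e3 + Z.2.2.2.1 * e2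
  have hY4 : Y.2.2.2.1 = Y.1 * (Z.2.2.1 / Z.2.1 + Z.2.2.2.1) - Y.2.2.1 / Z.2.1 := by
    rw [hY3]
    field_simp
    ring
  refine mem_span_triple.2 ⟨Y.1, Y.2.2.1, Y.2.2.2.2, ?_⟩
  ext <;> simp [X1v, X2v, X3v, Tv, Uv, hY2, hY4, mul_comm, div_eq_mul_inv, sub_eq_add_neg]

lemma le_subordE (h1 : Z.1 = 0) (h2 : Z.2.1 = 1) : h ≤ subordE Z.2.2.2.1 := by
  intro Y hY
  obtain ⟨e2, e3⟩ := lb_eq_zero_iff.1 (hab Z hZ Y hY)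
  rw [h1, h2] at e2 e3
  have hY1 : Y.1 = 0 := by linear_combination -e2
  have hY4 : Y.2.2.2.1 = Z.2.2.2.1 * Y.2.1 := by linear_combination e3 - Z.2.2.1 * e2
  refine mem_span_triple.2 ⟨Y.2.1, Y.2.2.1, Y.2.2.2.2, ?_⟩
  ext <;> simp [X2v, X3v, Tv, Uv, hY1, hY4, mul_comm]

end

lemma le_subordInfty {h : Submodule ℝ G5} (h0 : ∀ Z ∈ h, Z.1 = 0 ∧ Z.2.1 = 0) :
    h ≤ subordInfty := by
  intro Y hY
  refine mem_span_triple.2 ⟨Y.2.2.1, Y.2.2.2.1, Y.2.2.2.2, ?_⟩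
  ext <;> simp [X3v, Tv, Uv, h0 Y hY]

lemma IsAbelian.eq_subord {h : Submodule ℝ G5} (hab : IsAbelian h) (hdim : finrank ℝ h = 3) :
    (∃ c, h = subordC c) ∨ h = subordInfty ∨ (∃ b d, b ≠ 0 ∧ h = subordBD b d) ∨
      ∃ e, h = subordE e := by
  by_cases h0 : ∀ Z ∈ h, Z.1 = 0 ∧ Z.2.1 = 0
  · exact Or.inr (Or.inl (eq_span_triple_of_le (le_subordInfty h0) hdim))
  push Not at h0
  obtain ⟨Z, hZ, hZ0⟩ := h0
  by_cases h1 : Z.1 = 0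
  · have h2 : Z.2.1 ≠ 0 := hZ0 h1
    have hZ' : Z.2.1⁻¹ • Z ∈ h := h.smul_mem _ hZ
    exact Or.inr (Or.inr (Or.inr
      ⟨_, eq_span_triple_of_le (le_subordE hab hZ' (by simp [h1]) (by simp [h2])) hdim⟩))
  have hZ' : Z.1⁻¹ • Z ∈ h := h.smul_mem _ hZ
  by_cases h2 : Z.2.1 = 0
  · exact Or.inl
      ⟨_, eq_span_triple_of_le (le_subordC hab hZ' (by simp [h1]) (by simp [h2])) hdim⟩
  · refine Or.inr (Or.inr (Or.inl ⟨_, _, ?_,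
      eq_span_triple_of_le (le_subordBD hab hZ' (by simp [h1]) (by simp [h1, h2])) hdim⟩))
    simp [h1, h2]

/-- A subspace `h ⊆ g̃` is a 3-dimensional Lie subalgebra with `β^U([X,Y]) = 0`
for all `X,Y ∈ h` if and only if it is one of:
`span{X₁+cX₃, T, U}` (`c ∈ ℝ`); `span{X₃, T, U}`;
`span{X₁+bX₂+dT, X₃−(1/b)T, U}` (`b ≠ 0`, `d ∈ ℝ`); or
`span{X₂+eT, X₃, U}` (`e ∈ ℝ`). -/
theorem stmt5 (h : Submodule ℝ G5) :
    (Module.finrank ℝ h = 3 ∧ (∀ X ∈ h, ∀ Y ∈ h, lb X Y ∈ h) ∧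
      (∀ X ∈ h, ∀ Y ∈ h, βU (lb X Y) = 0)) ↔
    ((∃ c : ℝ, h = Submodule.span ℝ {X1v + c • X3v, Tv, Uv}) ∨
      h = Submodule.span ℝ {X3v, Tv, Uv} ∨
      (∃ b d : ℝ, b ≠ 0 ∧
        h = Submodule.span ℝ {X1v + b • X2v + d • Tv, X3v - (1 / b) • Tv, Uv}) ∨
      (∃ e : ℝ, h = Submodule.span ℝ {X2v + e • Tv, X3v, Uv})) := by
  rw [← isAbelian_iff]
  refine ⟨fun ⟨hdim, hab⟩ ↦ hab.eq_subord hdim, ?_⟩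
  rintro (⟨c, rfl⟩ | rfl | ⟨b, d, hb, rfl⟩ | ⟨e, rfl⟩) <;>
    refine ⟨finrank_span_triple ?_, isAbelian_span ?_⟩ <;>
    simp_all [lb, X1v, X2v, X3v, Tv, Uv, mul_comm]
  all_goals
    refine Fintype.linearIndependent_iff.2 fun g hg ↦ ?_
    simp_all [Fin.sum_univ_three, Prod.ext_iff, Fin.forall_fin_succ]

end
end

section
/- Let h be a 3-dimensional Lie subalgebra of g̃ with β^U([X,Y]) = 0 for all X,Y ∈ h. Then h is an ideal of g̃ (i.e., [g̃,h] ⊆ h) if and only if h = span{X₂+eT, X₃, U} for some e ∈ ℝ or h = span{X₃, T, U}. Moreover each of these ideals is abelian: all brackets of pairs of its elements vanish. -/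
noncomputable section

/-!
Every bracket of `g̃` lies in `span{X₃, U}`, which is contained in both candidate subspaces, so
both are ideals; they are abelian because the only bracket that survives on them, `[X₂, T] = −U`,
cancels against its mirror image.

Conversely, let `h` be an ideal on which `β^U ∘ [·,·]` vanishes. For `Z ∈ h` also `[X₂, Z] ∈ h`,
and `β^U([Z, [X₂, Z]]) = z₁²`, so `h` has no `X₁`-component. On such vectors
`β^U([Z, Y]) = z_T y₂ − z₂ y_T`, so the `(X₂, T)`-components of `h` lie on one line:
either `h ⊆ span{X₃, T, U}` or `h ⊆ span{X₂ + eT, X₃, U}`, and equality follows by counting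
dimensions.
-/

theorem finrank_span_triple_le_s6 {K V : Type*} [DivisionRing K] [AddCommGroup V] [Module K V]
    (a b c : V) : Module.finrank K (Submodule.span K {a, b, c}) ≤ 3 := by
  classical
  have := (finrank_span_finset_le_card (R := K) ({a, b, c} : Finset V)).trans Finset.card_le_three
  rwa [Set.finrank, Finset.coe_insert, Finset.coe_insert, Finset.coe_singleton] at this

lemma mem_span_X2v_add_smul_Tv_X3v_Uv_iff (e : ℝ) (Z : G5) :
    Z ∈ Submodule.span ℝ ({X2v + e • Tv, X3v, Uv} : Set G5) ↔
      Z.1 = 0 ∧ Z.2.2.2.1 = e * Z.2.1 := by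
  simp only [Submodule.mem_span_insert, Submodule.mem_span_singleton]
  constructor
  · rintro ⟨a, _, ⟨b, _, ⟨c, rfl⟩, rfl⟩, rfl⟩
    simp [X2v, X3v, Tv, Uv, mul_comm]
  · obtain ⟨z₁, z₂, z₃, z₄, z₅⟩ := Z
    rintro ⟨rfl, hz₄ : z₄ = e * z₂⟩
    subst hz₄
    exact ⟨z₂, _, ⟨z₃, _, ⟨z₅, rfl⟩, rfl⟩, by simp [X2v, X3v, Tv, Uv, mul_comm]⟩

lemma mem_span_X3v_Tv_Uv_iff (Z : G5) :
    Z ∈ Submodule.span ℝ ({X3v, Tv, Uv} : Set G5) ↔ Z.1 = 0 ∧ Z.2.1 = 0 := by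
  simp only [Submodule.mem_span_insert, Submodule.mem_span_singleton]
  constructor
  · rintro ⟨a, _, ⟨b, _, ⟨c, rfl⟩, rfl⟩, rfl⟩
    simp [X3v, Tv, Uv]
  · obtain ⟨z₁, z₂, z₃, z₄, z₅⟩ := Z
    rintro ⟨rfl, rfl⟩
    exact ⟨z₃, _, ⟨z₄, _, ⟨z₅, rfl⟩, rfl⟩, by simp [X3v, Tv, Uv]⟩

lemma lb_mem_span_X3v_Uv (X Y : G5) : lb X Y ∈ Submodule.span ℝ ({X3v, Uv} : Set G5) :=
  Submodule.mem_span_pair.2 ⟨(lb X Y).2.2.1, βU (lb X Y), by simp [lb, βU, X3v, Uv]⟩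

lemma βU_lb_lb_X2v (Z : G5) : βU (lb Z (lb X2v Z)) = Z.1 ^ 2 := by
  simp [βU, lb, X2v]
  ring

lemma βU_lb_of_fst_eq_zero {X Y : G5} (hX : X.1 = 0) (hY : Y.1 = 0) :
    βU (lb X Y) = X.2.2.2.1 * Y.2.1 - X.2.1 * Y.2.2.2.1 := by
  simp [βU, lb, hX, hY]

section Ideal

variable {h : Submodule ℝ G5} (hideal : ∀ X : G5, ∀ Y ∈ h, lb X Y ∈ h)
  (hβ : ∀ X ∈ h, ∀ Y ∈ h, βU (lb X Y) = 0)
include hideal hβ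

lemma fst_eq_zero_of_mem_ideal {Z : G5} (hZ : Z ∈ h) : Z.1 = 0 := by
  have := hβ Z hZ _ (hideal X2v Z hZ)
  rwa [βU_lb_lb_X2v, sq_eq_zero_iff] at this

lemma eq_span_of_mem_ideal (hdim : Module.finrank ℝ h = 3) :
    (∃ e : ℝ, h = Submodule.span ℝ {X2v + e • Tv, X3v, Uv}) ∨
      h = Submodule.span ℝ {X3v, Tv, Uv} := by
  have hfst := fun Z (hZ : Z ∈ h) ↦ fst_eq_zero_of_mem_ideal hideal hβ hZ
  by_cases hX2 : ∀ Y ∈ h, Y.2.1 = 0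
  · refine .inr (Submodule.eq_of_le_of_finrank_le (fun Z hZ ↦ ?_)
      (hdim ▸ finrank_span_triple_le_s6 _ _ _))
    exact (mem_span_X3v_Tv_Uv_iff Z).2 ⟨hfst Z hZ, hX2 Z hZ⟩
  push Not at hX2
  obtain ⟨Y, hY, hY₂⟩ := hX2
  refine .inl ⟨Y.2.2.2.1 / Y.2.1, Submodule.eq_of_le_of_finrank_le (fun Z hZ ↦ ?_)
    (hdim ▸ finrank_span_triple_le_s6 _ _ _)⟩
  refine (mem_span_X2v_add_smul_Tv_X3v_Uv_iff _ Z).2 ⟨hfst Z hZ, ?_⟩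
  have := hβ Z hZ Y hY
  rw [βU_lb_of_fst_eq_zero (hfst Z hZ) (hfst Y hY)] at this
  field_simp
  linarith

end Ideal

lemma lb_eq_zero_of_mem_span_X2v_add_smul_Tv_X3v_Uv (e : ℝ) {X Y : G5}
    (hX : X ∈ Submodule.span ℝ ({X2v + e • Tv, X3v, Uv} : Set G5))
    (hY : Y ∈ Submodule.span ℝ ({X2v + e • Tv, X3v, Uv} : Set G5)) : lb X Y = 0 := by
  obtain ⟨hX₁, hXT⟩ := (mem_span_X2v_add_smul_Tv_X3v_Uv_iff e X).1 hX
  obtain ⟨hY₁, hYT⟩ := (mem_span_X2v_add_smul_Tv_X3v_Uv_iff e Y).1 hY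
  simp [lb, hX₁, hY₁, hXT, hYT]
  ring

lemma lb_eq_zero_of_mem_span_X3v_Tv_Uv {X Y : G5}
    (hX : X ∈ Submodule.span ℝ ({X3v, Tv, Uv} : Set G5))
    (hY : Y ∈ Submodule.span ℝ ({X3v, Tv, Uv} : Set G5)) : lb X Y = 0 := by
  obtain ⟨hX₁, hX₂⟩ := (mem_span_X3v_Tv_Uv_iff X).1 hX
  obtain ⟨hY₁, hY₂⟩ := (mem_span_X3v_Tv_Uv_iff Y).1 hY
  simp [lb, hX₁, hY₁, hX₂, hY₂]

/-- A 3-dimensional Lie subalgebra `h` of `g̃` with `β^U([·,·])|_h = 0` is an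
ideal of `g̃` iff `h = span{X₂+eT, X₃, U}` for some `e ∈ ℝ` or
`h = span{X₃, T, U}`; moreover each of these ideals is abelian. -/
theorem stmt6 :
    (∀ h : Submodule ℝ G5,
      Module.finrank ℝ h = 3 → (∀ X ∈ h, ∀ Y ∈ h, lb X Y ∈ h) →
      (∀ X ∈ h, ∀ Y ∈ h, βU (lb X Y) = 0) →
      ((∀ X : G5, ∀ Y ∈ h, lb X Y ∈ h) ↔
        ((∃ e : ℝ, h = Submodule.span ℝ {X2v + e • Tv, X3v, Uv}) ∨
          h = Submodule.span ℝ {X3v, Tv, Uv}))) ∧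
    (∀ e : ℝ, ∀ X ∈ Submodule.span ℝ ({X2v + e • Tv, X3v, Uv} : Set G5),
      ∀ Y ∈ Submodule.span ℝ ({X2v + e • Tv, X3v, Uv} : Set G5), lb X Y = 0) ∧
    (∀ X ∈ Submodule.span ℝ ({X3v, Tv, Uv} : Set G5),
      ∀ Y ∈ Submodule.span ℝ ({X3v, Tv, Uv} : Set G5), lb X Y = 0) := by
  refine ⟨fun h hdim _ hβ ↦ ⟨fun hideal ↦ eq_span_of_mem_ideal hideal hβ hdim, ?_⟩,
    fun e X hX Y hY ↦ lb_eq_zero_of_mem_span_X2v_add_smul_Tv_X3v_Uv e hX hY,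
    fun X hX Y hY ↦ lb_eq_zero_of_mem_span_X3v_Tv_Uv hX hY⟩
  rintro (⟨e, rfl⟩ | rfl) X Y _ <;> refine Submodule.span_mono ?_ (lb_mem_span_X3v_Uv X Y)
  · exact Set.subset_insert _ _
  · exact Set.insert_subset_insert (Set.subset_insert _ _)

end
end

section
/- Consider the right action of the subgroups T^e and T^∞ on M = Γ₀\G. (i) Every orbit of T⁰ = {(0,s,u,0) : s,u ∈ ℝ} on M is compact, and every orbit of T^∞ = {(0,0,u,s) : u,s ∈ ℝ} on M is compact (these orbits are the Lagrangian 2-torus leaves of the foliations of the Kodaira–Thurston manifold induced by the subordinate subalgebras h^{e=0} and h^{e=±∞}). (ii) If e ∈ ℝ is irrational, then no orbit of T^e = {(0,s,u,es) : s,u ∈ ℝ} on M is compact; in particular for irrational e the induced Lagrangian foliation is not a fibration of M by tori. -/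
noncomputable section

/-- The relation identifying `g` with `γ₀ · g` for `γ₀` in the integer lattice
`Γ₀ = ℤ⁴ ⊆ G`. -/
def KTrel (g g' : G4) : Prop :=
  ∃ γ : ℤ × ℤ × ℤ × ℤ,
    g' = gmul ((γ.1 : ℝ), (γ.2.1 : ℝ), (γ.2.2.1 : ℝ), (γ.2.2.2 : ℝ)) g

/-- The Kodaira–Thurston manifold `M = Γ₀\G`, with the quotient topology. -/
def KTM : Type := Quot KTrel

instance : TopologicalSpace KTM := instTopologicalSpaceQuot

/-! ### Auxiliary lemmas -/

lemma KT_coe_int_add (n : ℤ) (x : ℝ) : ((↑n + x : ℝ) : AddCircle (1:ℝ)) = x := by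
  rw [AddCircle.coe_add]; simp

lemma KT_coe_eq_iff (a b : ℝ) :
    (a : AddCircle (1:ℝ)) = b ↔ ∃ n : ℤ, b = a + n := by
  rw [QuotientAddGroup.eq]
  simp only [AddSubgroup.mem_zmultiples_iff, zsmul_eq_mul, mul_one]
  constructor
  · rintro ⟨k, hk⟩; exact ⟨k, by linarith⟩
  · rintro ⟨k, hk⟩; exact ⟨k, by linarith⟩

/-- The projection to the `(y, t)` torus. -/
def KTtoT : KTM → AddCircle (1:ℝ) × AddCircle (1:ℝ) :=
  Quot.lift (fun a => ((a.2.1 : AddCircle (1:ℝ)), (a.2.2.2 : AddCircle (1:ℝ)))) <| by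
    rintro a b ⟨γ, rfl⟩
    simp only [gmul, Prod.mk.injEq]
    exact ⟨(KT_coe_int_add _ _).symm, (KT_coe_int_add _ _).symm⟩

lemma KTtoT_continuous : Continuous KTtoT := by
  apply continuous_quot_lift
  exact ((AddCircle.continuous_mk' 1).comp (continuous_fst.comp continuous_snd)).prodMk
    ((AddCircle.continuous_mk' 1).comp
      (continuous_snd.comp (continuous_snd.comp continuous_snd)))

lemma KTtoT_mk (a : G4) :
    KTtoT (Quot.mk KTrel a) =
      ((a.2.1 : AddCircle (1:ℝ)), (a.2.2.2 : AddCircle (1:ℝ))) := rfl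

lemma KT_coe_int (m : ℤ) : (((m : ℝ)) : AddCircle (1:ℝ)) = 0 := by
  simpa using KT_coe_int_add m 0

lemma KT_sound {a b : G4} (γ : ℤ × ℤ × ℤ × ℤ)
    (h : b = gmul ((γ.1 : ℝ), (γ.2.1 : ℝ), (γ.2.2.1 : ℝ), (γ.2.2.2 : ℝ)) a) :
    Quot.mk KTrel a = Quot.mk KTrel b :=
  Quot.sound ⟨γ, h⟩

/-- The subgroup `ℤ + ℤe` of `ℝ`. -/
def KTsub (e : ℝ) : AddSubgroup ℝ where
  carrier := {x | ∃ n m : ℤ, x = (n : ℝ) + e * m}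
  zero_mem' := ⟨0, 0, by push_cast; ring⟩
  add_mem' := by
    rintro a b ⟨n₁, m₁, rfl⟩ ⟨n₂, m₂, rfl⟩
    exact ⟨n₁ + n₂, m₁ + m₂, by push_cast; ring⟩
  neg_mem' := by
    rintro a ⟨n, m, rfl⟩
    exact ⟨-n, -m, by push_cast; ring⟩

lemma KTsub_dense (e : ℝ) (he : Irrational e) : Dense (KTsub e : Set ℝ) := by
  rcases AddSubgroup.dense_or_cyclic (KTsub e) with h | ⟨a, ha⟩
  · exact h
  · exfalso
    have h1 : (1 : ℝ) ∈ KTsub e := ⟨1, 0, by push_cast; ring⟩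
    have h2 : e ∈ KTsub e := ⟨0, 1, by push_cast; ring⟩
    rw [ha, AddSubgroup.mem_closure_singleton] at h1 h2
    obtain ⟨k, hk⟩ := h1
    obtain ⟨l, hl⟩ := h2
    simp only [zsmul_eq_mul] at hk hl
    have hk0 : (k : ℝ) ≠ 0 := by
      intro h; rw [h, zero_mul] at hk; exact one_ne_zero hk.symm
    refine he ⟨(l : ℚ) / (k : ℚ), ?_⟩
    push_cast
    rw [← hl]
    rw [div_eq_iff hk0]
    linear_combination (-(l : ℝ)) * hk

/-! ### The main theorem -/

/-- (i) Every orbit of `T⁰ = {(0,s,u,0)}` and of `T^∞ = {(0,0,u,s)}` on `M` is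
compact.  (ii) If `e` is irrational then no orbit of `T^e = {(0,s,u,es)}` on `M`
is compact. -/
theorem stmt7 :
    (∀ g : G4,
      IsCompact {m : KTM | ∃ s u : ℝ, m = Quot.mk KTrel (gmul g (0, s, u, 0))}) ∧
    (∀ g : G4,
      IsCompact {m : KTM | ∃ u s : ℝ, m = Quot.mk KTrel (gmul g (0, 0, u, s))}) ∧
    (∀ e : ℝ, Irrational e → ∀ g : G4,
      ¬ IsCompact {m : KTM | ∃ s u : ℝ, m = Quot.mk KTrel (gmul g (0, s, u, e * s))}) := by
  refine ⟨?_, ?_, ?_⟩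
  · -- orbits of T⁰ are compact
    intro g
    have hset : {m : KTM | ∃ s u : ℝ, m = Quot.mk KTrel (gmul g (0, s, u, 0))} =
        (fun p : ℝ × ℝ => Quot.mk KTrel (gmul g (0, p.1, p.2, 0))) ''
          (Set.Icc 0 1 ×ˢ Set.Icc 0 1) := by
      ext m
      constructor
      · rintro ⟨s, u, rfl⟩
        refine ⟨(Int.fract s, Int.fract (u + (⌊s⌋ : ℝ) * g.1)),
          ⟨⟨Int.fract_nonneg _, (Int.fract_lt_one _).le⟩,
           ⟨Int.fract_nonneg _, (Int.fract_lt_one _).le⟩⟩, ?_⟩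
        refine KT_sound (0, ⌊s⌋, ⌊u + (⌊s⌋ : ℝ) * g.1⌋, 0) ?_
        simp only [gmul, Int.fract, Prod.mk.injEq, Int.cast_zero]
        refine ⟨by ring, by ring, by ring, by ring⟩
      · rintro ⟨⟨s, u⟩, _, rfl⟩
        exact ⟨s, u, rfl⟩
    rw [hset]
    refine (isCompact_Icc.prod isCompact_Icc).image ?_
    exact continuous_quot_mk.comp (by unfold gmul; fun_prop)
  · -- orbits of T^∞ are compact
    intro g
    have hset : {m : KTM | ∃ u s : ℝ, m = Quot.mk KTrel (gmul g (0, 0, u, s))} =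
        (fun p : ℝ × ℝ => Quot.mk KTrel (gmul g (0, 0, p.1, p.2))) ''
          (Set.Icc 0 1 ×ˢ Set.Icc 0 1) := by
      ext m
      constructor
      · rintro ⟨u, s, rfl⟩
        refine ⟨(Int.fract u, Int.fract s),
          ⟨⟨Int.fract_nonneg _, (Int.fract_lt_one _).le⟩,
           ⟨Int.fract_nonneg _, (Int.fract_lt_one _).le⟩⟩, ?_⟩
        refine KT_sound (0, 0, ⌊u⌋, ⌊s⌋) ?_
        simp only [gmul, Int.fract, Prod.mk.injEq, Int.cast_zero]
        refine ⟨by ring, by ring, by ring, by ring⟩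
      · rintro ⟨⟨u, s⟩, _, rfl⟩
        exact ⟨u, s, rfl⟩
    rw [hset]
    refine (isCompact_Icc.prod isCompact_Icc).image ?_
    exact continuous_quot_mk.comp (by unfold gmul; fun_prop)
  · -- orbits of T^e, e irrational, are not compact
    intro e he g hc
    set S := {m : KTM | ∃ s u : ℝ, m = Quot.mk KTrel (gmul g (0, s, u, e * s))} with hS
    obtain ⟨x, y, z, t⟩ := g
    -- image of the orbit in the (y,t) torus
    have hLcl : IsClosed (KTtoT '' S) := (hc.image KTtoT_continuous).isClosed
    -- the "bad" point
    set q : AddCircle (1:ℝ) × AddCircle (1:ℝ) :=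
      ((y : AddCircle (1:ℝ)), ((t + 1/2 : ℝ) : AddCircle (1:ℝ))) with hq
    -- the set of multiples of e in the circle is dense
    have hB : Dense (Set.range (fun m : ℤ => ((e * m : ℝ) : AddCircle (1:ℝ)))) := by
      have hd := KTsub_dense e he
      have hsur : DenseRange ((↑) : ℝ → AddCircle (1:ℝ)) :=
        Function.Surjective.denseRange (by exact Quot.exists_rep)
      have himg : Dense (((↑) : ℝ → AddCircle (1:ℝ)) '' (KTsub e : Set ℝ)) :=
        hsur.dense_image (AddCircle.continuous_mk' 1) hd
      refine himg.mono ?_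
      rintro _ ⟨w, ⟨n, m, rfl⟩, rfl⟩
      exact ⟨m, (KT_coe_int_add n (e * m)).symm⟩
    -- q is in the closure of the image of the orbit
    have hqcl : q ∈ closure (KTtoT '' S) := by
      have hsub : (fun v : AddCircle (1:ℝ) =>
          ((y : AddCircle (1:ℝ)), ((t : ℝ) : AddCircle (1:ℝ)) + v)) ''
            (Set.range (fun m : ℤ => ((e * m : ℝ) : AddCircle (1:ℝ)))) ⊆ KTtoT '' S := by
        rintro _ ⟨_, ⟨m, rfl⟩, rfl⟩
        refine ⟨Quot.mk KTrel (gmul (x, y, z, t) (0, (m : ℝ), 0, e * m)), ⟨m, 0, rfl⟩, ?_⟩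
        rw [KTtoT_mk]
        simp only [gmul]
        rw [Prod.mk.injEq]
        constructor
        · rw [AddCircle.coe_add, KT_coe_int, add_zero]
        · rw [AddCircle.coe_add]
      have hcont : Continuous (fun v : AddCircle (1:ℝ) =>
          ((y : AddCircle (1:ℝ)), ((t : ℝ) : AddCircle (1:ℝ)) + v)) := by fun_prop
      have h12 : ((1/2 : ℝ) : AddCircle (1:ℝ)) ∈
          closure (Set.range (fun m : ℤ => ((e * m : ℝ) : AddCircle (1:ℝ)))) := hB _
      have : q ∈ (fun v : AddCircle (1:ℝ) =>
          ((y : AddCircle (1:ℝ)), ((t : ℝ) : AddCircle (1:ℝ)) + v)) ''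
            closure (Set.range (fun m : ℤ => ((e * m : ℝ) : AddCircle (1:ℝ)))) := by
        refine ⟨((1/2 : ℝ) : AddCircle (1:ℝ)), h12, ?_⟩
        simp [hq, AddCircle.coe_add]
      exact closure_mono hsub (image_closure_subset_closure_image hcont this)
    rw [hLcl.closure_eq] at hqcl
    -- hence q is in the image, giving integers that make e rational
    obtain ⟨m₀, hm₀S, hm₀q⟩ := hqcl
    obtain ⟨s, u, rfl⟩ := hm₀S
    have h1 : ((y + s : ℝ) : AddCircle (1:ℝ)) = (y : AddCircle (1:ℝ)) ∧
        ((t + e * s : ℝ) : AddCircle (1:ℝ)) = ((t + 1/2 : ℝ) : AddCircle (1:ℝ)) := by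
      rw [KTtoT_mk] at hm₀q
      simp only [gmul] at hm₀q
      rw [hq, Prod.mk.injEq] at hm₀q
      exact hm₀q
    obtain ⟨hy, ht⟩ := h1
    rw [KT_coe_eq_iff] at hy ht
    obtain ⟨n, hn⟩ := hy
    obtain ⟨m, hm⟩ := ht
    -- s = -n and e * s = 1/2 + m
    have hs : s = -(n : ℝ) := by linarith
    have hes : e * s = 1/2 - m := by linarith
    have hn0 : n ≠ 0 := by
      intro h
      rw [h] at hs
      simp only [Int.cast_zero, neg_zero] at hs
      rw [hs, mul_zero] at hes
      have : (2 * m : ℤ) = 1 := by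
        have : (2 * (m : ℝ)) = 1 := by linarith
        exact_mod_cast this
      omega
    have hncast : (n : ℝ) ≠ 0 := Int.cast_ne_zero.mpr hn0
    refine he ⟨((m : ℚ) - 1/2) / (n : ℚ), ?_⟩
    push_cast
    rw [div_eq_iff hncast]
    rw [hs] at hes
    linear_combination hes

end
end

section
/- Fix an integer k ≥ 1 and define σ : ℤ² × ℤ² → ℤ² by σ((x₀,t₀),(m,n)) = (m − n·x₀ + 2k·t₀ − k·x₀², n + 2k·x₀). Then σ is an action of the additive group ℤ² on ℤ² (σ((0,0),·) = id and σ((x₀,t₀)+(x₁,t₁),·) = σ((x₀,t₀),·)∘σ((x₁,t₁),·)), and every orbit of this action contains exactly one point of the set {0,1,…,2k−1} × {0,1,…,2k−1}; consequently the action has exactly 4k² orbits. (This is the count showing that the representation π_{−2k} occurs in L²_k(P) with multiplicity 4k².) -/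
noncomputable section

/-- The action `σ((x₀,t₀),(m,n)) = (m − n·x₀ + 2k·t₀ − k·x₀², n + 2k·x₀)` of
`ℤ²` on `ℤ²`. -/
def σact (k : ℕ) (p q : ℤ × ℤ) : ℤ × ℤ :=
  (q.1 - q.2 * p.1 + 2 * (k : ℤ) * p.2 - (k : ℤ) * p.1 ^ 2, q.2 + 2 * (k : ℤ) * p.1)

namespace Stmt14Aux

lemma σ_zero (k : ℕ) (q : ℤ × ℤ) : σact k (0, 0) q = q := by
  simp [σact]

lemma σ_add (k : ℕ) (p p' q : ℤ × ℤ) :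
    σact k (p + p') q = σact k p (σact k p' q) := by
  simp only [σact, Prod.fst_add, Prod.snd_add, Prod.mk.injEq]
  constructor <;> ring

lemma σ_inv (k : ℕ) (p q : ℤ × ℤ) : σact k (-p) (σact k p q) = q := by
  rw [← σ_add]
  have : (-p + p : ℤ × ℤ) = (0, 0) := by
    rw [neg_add_cancel]; rfl
  rw [this, σ_zero]

def inBox (k : ℕ) (q : ℤ × ℤ) : Prop :=
  0 ≤ q.1 ∧ q.1 < 2 * (k : ℤ) ∧ 0 ≤ q.2 ∧ q.2 < 2 * (k : ℤ)

lemma box_unique (k : ℕ) (hk : 1 ≤ k) {q q' : ℤ × ℤ} (h : inBox k q) (h' : inBox k q')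
    (p : ℤ × ℤ) (hp : σact k p q = q') : q' = q := by
  have hk' : (1 : ℤ) ≤ (k : ℤ) := by exact_mod_cast hk
  have hb : (0 : ℤ) < 2 * (k : ℤ) := by linarith
  obtain ⟨h1, h2, h3, h4⟩ := h
  obtain ⟨h1', h2', h3', h4'⟩ := h'
  have hs : q.2 + 2 * (k : ℤ) * p.1 = q'.2 := congrArg Prod.snd hp
  have hx : p.1 = 0 := by
    have e1 : 2 * (k : ℤ) * p.1 < 2 * (k : ℤ) * 1 := by linarith
    have e2 : 2 * (k : ℤ) * (-1) < 2 * (k : ℤ) * p.1 := by linarith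
    have l1 : p.1 < 1 := lt_of_mul_lt_mul_left e1 (le_of_lt hb)
    have l2 : (-1 : ℤ) < p.1 := lt_of_mul_lt_mul_left e2 (le_of_lt hb)
    omega
  have hf : q.1 - q.2 * p.1 + 2 * (k : ℤ) * p.2 - (k : ℤ) * p.1 ^ 2 = q'.1 :=
    congrArg Prod.fst hp
  rw [hx] at hf hs
  simp at hf hs
  have ht : p.2 = 0 := by
    have e1 : 2 * (k : ℤ) * p.2 < 2 * (k : ℤ) * 1 := by linarith
    have e2 : 2 * (k : ℤ) * (-1) < 2 * (k : ℤ) * p.2 := by linarith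
    have l1 : p.2 < 1 := lt_of_mul_lt_mul_left e1 (le_of_lt hb)
    have l2 : (-1 : ℤ) < p.2 := lt_of_mul_lt_mul_left e2 (le_of_lt hb)
    omega
  rw [ht] at hf
  apply Prod.ext <;> simp_all

/-- Canonical representative of the orbit of `q`. -/
def rp (k : ℕ) (q : ℤ × ℤ) : ℤ × ℤ :=
  ((q.1 + q.2 * (q.2 / (2 * (k : ℤ))) - (k : ℤ) * (q.2 / (2 * (k : ℤ))) ^ 2) % (2 * (k : ℤ)),
   q.2 % (2 * (k : ℤ)))

lemma rp_inBox (k : ℕ) (hk : 1 ≤ k) (q : ℤ × ℤ) : inBox k (rp k q) := by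
  have hk' : (1 : ℤ) ≤ (k : ℤ) := by exact_mod_cast hk
  have hb : (0 : ℤ) < 2 * (k : ℤ) := by linarith
  exact ⟨Int.emod_nonneg _ (by omega), Int.emod_lt_of_pos _ hb,
    Int.emod_nonneg _ (by omega), Int.emod_lt_of_pos _ hb⟩

lemma exists_σ_rp (k : ℕ) (q : ℤ × ℤ) : ∃ p : ℤ × ℤ, σact k p q = rp k q := by
  refine ⟨(-(q.2 / (2 * (k : ℤ))),
    -((q.1 + q.2 * (q.2 / (2 * (k : ℤ))) - (k : ℤ) * (q.2 / (2 * (k : ℤ))) ^ 2)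
        / (2 * (k : ℤ)))), ?_⟩
  unfold σact rp
  rw [Int.emod_def, Int.emod_def]
  simp only [Prod.mk.injEq]
  constructor <;> ring

lemma rp_eq_of_rel (k : ℕ) (hk : 1 ≤ k) (q q' : ℤ × ℤ) (p : ℤ × ℤ)
    (hp : σact k p q = q') : rp k q = rp k q' := by
  obtain ⟨a, ha⟩ := exists_σ_rp k q
  obtain ⟨a', ha'⟩ := exists_σ_rp k q'
  have h1 : σact k (a' + (p + -a)) (rp k q) = rp k q' := by
    rw [σ_add, σ_add, ← ha, σ_inv, hp, ha']
  exact (box_unique k hk (rp_inBox k hk q) (rp_inBox k hk q') _ h1).symm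

lemma rp_fixed (k : ℕ) (hk : 1 ≤ k) (q : ℤ × ℤ) (h : inBox k q) : rp k q = q := by
  obtain ⟨a, ha⟩ := exists_σ_rp k q
  exact box_unique k hk h (rp_inBox k hk q) a ha

noncomputable def theEquiv (k : ℕ) (hk : 1 ≤ k) :
    Quot (fun q q' : ℤ × ℤ => ∃ p : ℤ × ℤ, σact k p q = q') ≃ Fin (2 * k) × Fin (2 * k) where
  toFun := Quot.lift
    (fun q => (⟨(rp k q).1.toNat, by have h := rp_inBox k hk q; obtain ⟨a, b, c, d⟩ := h; omega⟩,
               ⟨(rp k q).2.toNat, by have h := rp_inBox k hk q; obtain ⟨a, b, c, d⟩ := h; omega⟩))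
    (by rintro q q' ⟨p, hp⟩
        simp only [rp_eq_of_rel k hk q q' p hp])
  invFun := fun x => Quot.mk _ (((x.1 : ℕ) : ℤ), ((x.2 : ℕ) : ℤ))
  left_inv := by
    refine Quot.ind ?_
    intro q
    simp only
    obtain ⟨a, b, c, d⟩ := rp_inBox k hk q
    rw [Int.toNat_of_nonneg a, Int.toNat_of_nonneg c]
    obtain ⟨p, hp⟩ := exists_σ_rp k q
    have : (rp k q).1 = (rp k q).1 ∧ (rp k q).2 = (rp k q).2 := ⟨rfl, rfl⟩
    have hrel : ∃ p' : ℤ × ℤ, σact k p' ((rp k q).1, (rp k q).2) = q :=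
      ⟨-p, by rw [show ((rp k q).1, (rp k q).2) = rp k q from rfl, ← hp, σ_inv]⟩
    exact Quot.sound hrel
  right_inv := by
    rintro ⟨i, j⟩
    simp only
    have hbox : inBox k (((i : ℕ) : ℤ), ((j : ℕ) : ℤ)) := by
      refine ⟨by positivity, ?_, by positivity, ?_⟩
      · show ((i : ℕ) : ℤ) < 2 * (k : ℤ); exact_mod_cast i.isLt
      · show ((j : ℕ) : ℤ) < 2 * (k : ℤ); exact_mod_cast j.isLt
    have h := rp_fixed k hk _ hbox
    simp only [Prod.ext_iff, Fin.ext_iff, h]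
    simp

end Stmt14Aux

open Stmt14Aux in
/-- `σ` is an action of the additive group `ℤ²` on `ℤ²`, every orbit contains
exactly one point of `{0,…,2k−1} × {0,…,2k−1}`, and consequently the action has
exactly `4k²` orbits. -/
theorem stmt14 (k : ℕ) (hk : 1 ≤ k) :
    (∀ q : ℤ × ℤ, σact k (0, 0) q = q) ∧
    (∀ p p' q : ℤ × ℤ, σact k (p + p') q = σact k p (σact k p' q)) ∧
    (∀ q : ℤ × ℤ, ∃! q' : ℤ × ℤ,
      (0 ≤ q'.1 ∧ q'.1 < 2 * (k : ℤ) ∧ 0 ≤ q'.2 ∧ q'.2 < 2 * (k : ℤ)) ∧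
        ∃ p : ℤ × ℤ, σact k p q = q') ∧
    Nat.card (Quot (fun q q' : ℤ × ℤ => ∃ p : ℤ × ℤ, σact k p q = q')) =
      4 * k ^ 2 := by
  refine ⟨σ_zero k, σ_add k, ?_, ?_⟩
  · intro q
    refine ⟨rp k q, ⟨rp_inBox k hk q, exists_σ_rp k q⟩, ?_⟩
    rintro q'' ⟨hbox, p'', hp''⟩
    calc q'' = rp k q'' := (rp_fixed k hk q'' hbox).symm
      _ = rp k q := (rp_eq_of_rel k hk q q'' p'' hp'').symm
  · rw [Nat.card_congr (theEquiv k hk)]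
    simp [Nat.card_eq_fintype_card]
    ring
end
end
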